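/- Let f ∈ F[X] and x ∈ F with α(f,x) < 1, and let ζ := lim_k N_f^k(x) be the limit of the Newton sequence. Then for every k, ‖N_f^k(x) - ζ‖ = β(f, N_f^k(x)), i.e., the distance from each Newton iterate to the limit root equals the length of the next Newton step. -/
import Mathlib

open Polynomial Filter

noncomputable def sbeta {F : Type*} [NormedField F] (f : F[X]) (x : F) : ℝ :=
  ‖f.eval x / f.derivative.eval x‖

noncomputable def sgamma {F : Type*} [NormedField F] (f : F[X]) (x : F) : ℝ :=
  ⨆ k : ℕ,
    ‖((⇑(derivative (R := F)))^[k + 2] f).eval x /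
        (((k + 2).factorial : F) * f.derivative.eval x)‖ ^ ((1 : ℝ) / (k + 1))

noncomputable def salpha {F : Type*} [NormedField F] (f : F[X]) (x : F) : ℝ :=
  sbeta f x * sgamma f x

noncomputable def newton {F : Type*} [NormedField F] (f : F[X]) (x : F) : F :=
  x - f.eval x / f.derivative.eval x

section Helpers

variable {F : Type*} [NormedField F]

noncomputable def gterm (f : F[X]) (y : F) (k : ℕ) : ℝ :=
  ‖(hasseDeriv (k + 2) f).eval y / f.derivative.eval y‖ ^ ((1 : ℝ) / (k + 1))

lemma sgamma_eq [CharZero F] (f : F[X]) (y : F) : sgamma f y = ⨆ k : ℕ, gterm f y k := by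
  unfold sgamma gterm
  congr 1
  funext k
  congr 2
  have h1 : ((⇑(derivative (R := F)))^[k + 2] f) = ((k+2).factorial : F[X]) * hasseDeriv (k+2) f := by
    rw [← Polynomial.factorial_smul_hasseDeriv (R := F) (k+2)]
    simp [nsmul_eq_mul]
  rw [h1, eval_mul, eval_natCast]
  have hn : ((k+2).factorial : F) ≠ 0 := Nat.cast_ne_zero.2 (Nat.factorial_ne_zero _)
  rw [mul_div_mul_left _ _ hn]

lemma gterm_nonneg (f : F[X]) (y : F) (k : ℕ) : 0 ≤ gterm f y k :=
  Real.rpow_nonneg (norm_nonneg _) _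

lemma gterm_bdd (f : F[X]) (y : F) : BddAbove (Set.range (gterm f y)) := by
  have hfin : (insert (0:ℝ) (gterm f y '' Set.Iic f.natDegree)).Finite :=
    ((Set.finite_Iic _).image _).insert 0
  refine hfin.bddAbove.mono ?_
  rintro _ ⟨k, rfl⟩
  by_cases hk : k ≤ f.natDegree
  · exact Set.mem_insert_of_mem _ ⟨k, hk, rfl⟩
  · left
    have h0 : hasseDeriv (k+2) f = 0 :=
      f.hasseDeriv_eq_zero_of_lt_natDegree _ (by omega)
    simp only [gterm, h0, eval_zero, zero_div, norm_zero]
    exact Real.zero_rpow (by positivity)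

lemma sgamma_nonneg (f : F[X]) (y : F) : 0 ≤ sgamma f y :=
  Real.iSup_nonneg fun k => Real.rpow_nonneg (norm_nonneg _) _

lemma sbeta_nonneg (f : F[X]) (y : F) : 0 ≤ sbeta f y := norm_nonneg _

lemma salpha_nonneg (f : F[X]) (y : F) : 0 ≤ salpha f y :=
  mul_nonneg (sbeta_nonneg f y) (sgamma_nonneg f y)

lemma hasse_norm_le [CharZero F] (f : F[X]) {y : F} (hy : f.derivative.eval y ≠ 0) (k : ℕ) :
    ‖(hasseDeriv (k + 2) f).eval y‖ ≤ ‖f.derivative.eval y‖ * sgamma f y ^ (k + 1) := by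
  have h1 : gterm f y k ≤ sgamma f y := by
    rw [sgamma_eq]
    exact le_ciSup (gterm_bdd f y) k
  have h2 : ‖(hasseDeriv (k + 2) f).eval y / f.derivative.eval y‖ ≤ sgamma f y ^ (k + 1) := by
    have h3 := pow_le_pow_left₀ (gterm_nonneg f y k) h1 (k + 1)
    have h4 : gterm f y k ^ (k + 1) = ‖(hasseDeriv (k + 2) f).eval y / f.derivative.eval y‖ := by
      rw [gterm, ← Real.rpow_natCast (_ ^ _) (k+1), ← Real.rpow_mul (norm_nonneg _)]
      rw [show (1:ℝ) / (k+1) * ((k+1 : ℕ) : ℝ) = 1 by push_cast; field_simp]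
      exact Real.rpow_one _
    rw [h4] at h3
    exact h3
  rw [norm_div, div_le_iff₀ (norm_pos_iff.2 hy)] at h2
  linarith [h2]

end Helpers
section Step

variable {F : Type*} [NormedField F] [IsUltrametricDist F] [CharZero F]

open IsUltrametricDist

lemma expand (g : F[X]) (y h : F) {N : ℕ} (hN : g.natDegree < N) :
    g.eval (y + h) = ∑ i ∈ Finset.range N, (hasseDeriv i g).eval y * h ^ i := by
  rw [add_comm, ← taylor_eval]
  rw [Polynomial.eval_eq_sum_range' (by rwa [natDegree_taylor])]
  exact Finset.sum_congr rfl fun i _ => by rw [taylor_coeff]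

variable {f : F[X]} {y : F}

lemma step_norm (hy : f.derivative.eval y ≠ 0) :
    ‖-(f.eval y / f.derivative.eval y)‖ = sbeta f y := by
  rw [norm_neg]; rfl

/-- Norm of f at the Newton iterate. -/
lemma fval_newton_le (hy : f.derivative.eval y ≠ 0) (hα : salpha f y ≤ 1) :
    ‖f.eval (newton f y)‖ ≤ salpha f y * sbeta f y * ‖f.derivative.eval y‖ := by
  set h : F := -(f.eval y / f.derivative.eval y) with hh
  have hnewton : newton f y = y + h := by rw [newton, hh]; ring
  set N := f.natDegree + 2 with hN
  have hdeg : f.natDegree < N := by omega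
  have hexp := expand f y h hdeg
  have hsplit : ∑ i ∈ Finset.range N, (hasseDeriv i f).eval y * h ^ i
      = (∑ i ∈ Finset.range 2, (hasseDeriv i f).eval y * h ^ i)
        + ∑ i ∈ Finset.Ico 2 N, (hasseDeriv i f).eval y * h ^ i := by
    rw [Finset.range_eq_Ico]
    exact (Finset.sum_Ico_consecutive _ (Nat.zero_le 2) (by omega)).symm
  have hfirst : ∑ i ∈ Finset.range 2, (hasseDeriv i f).eval y * h ^ i = 0 := by
    simp only [Finset.sum_range_succ, Finset.range_one, Finset.sum_singleton,
      hasseDeriv_zero', hasseDeriv_one', pow_zero, pow_one, mul_one, hh]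
    field_simp
    ring
  rw [hnewton, hexp, hsplit, hfirst, zero_add]
  refine norm_sum_le_of_forall_le_of_nonneg ?_ ?_
  · have := salpha_nonneg f y; have := sbeta_nonneg f y; positivity
  · intro i hi
    simp only [Finset.mem_Ico] at hi
    obtain ⟨k, rfl⟩ : ∃ k, i = k + 2 := ⟨i - 2, by omega⟩
    have hb : ‖h‖ = sbeta f y := step_norm hy
    have h1 : ‖(hasseDeriv (k+2) f).eval y * h ^ (k+2)‖
        = ‖(hasseDeriv (k+2) f).eval y‖ * sbeta f y ^ (k+2) := by
      rw [norm_mul, norm_pow, hb]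
    rw [h1]
    have h2 := hasse_norm_le f hy k
    have h3 : ‖(hasseDeriv (k+2) f).eval y‖ * sbeta f y ^ (k+2)
        ≤ (‖f.derivative.eval y‖ * sgamma f y ^ (k+1)) * sbeta f y ^ (k+2) := by
      exact mul_le_mul_of_nonneg_right h2 (pow_nonneg (sbeta_nonneg f y) _)
    refine h3.trans ?_
    have hkey : (‖f.derivative.eval y‖ * sgamma f y ^ (k+1)) * sbeta f y ^ (k+2)
        = salpha f y ^ (k+1) * (sbeta f y * ‖f.derivative.eval y‖) := by
      rw [salpha, mul_pow]; ring
    rw [hkey]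
    have hpow : salpha f y ^ (k+1) ≤ salpha f y := by
      calc salpha f y ^ (k+1) = salpha f y * salpha f y ^ k := by ring
        _ ≤ salpha f y * 1 :=
          mul_le_mul_of_nonneg_left (pow_le_one₀ (salpha_nonneg f y) hα) (salpha_nonneg f y)
        _ = salpha f y := mul_one _
    calc salpha f y ^ (k+1) * (sbeta f y * ‖f.derivative.eval y‖)
        ≤ salpha f y * (sbeta f y * ‖f.derivative.eval y‖) :=
          mul_le_mul_of_nonneg_right hpow (mul_nonneg (sbeta_nonneg f y) (norm_nonneg _))
      _ = salpha f y * sbeta f y * ‖f.derivative.eval y‖ := by ring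

/-- Norm of f' is preserved at the Newton iterate. -/
lemma deriv_newton_norm_eq (hy : f.derivative.eval y ≠ 0) (hα : salpha f y < 1) :
    ‖f.derivative.eval (newton f y)‖ = ‖f.derivative.eval y‖ := by
  set h : F := -(f.eval y / f.derivative.eval y) with hh
  have hnewton : newton f y = y + h := by rw [newton, hh]; ring
  set N := f.natDegree + 1 with hN
  have hdeg : (derivative f).natDegree < N :=
    lt_of_le_of_lt (natDegree_derivative_le f) (by omega)
  have hexp := expand (derivative f) y h hdeg
  have hsplit : ∑ i ∈ Finset.range N, (hasseDeriv i (derivative f)).eval y * h ^ i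
      = (hasseDeriv 0 (derivative f)).eval y * h ^ 0
        + ∑ i ∈ Finset.Ico 1 N, (hasseDeriv i (derivative f)).eval y * h ^ i := by
    rw [Finset.range_eq_Ico, ← Finset.sum_Ico_consecutive _ (Nat.zero_le 1) (by omega)]
    simp
  have hrest : ‖∑ i ∈ Finset.Ico 1 N, (hasseDeriv i (derivative f)).eval y * h ^ i‖
      ≤ salpha f y * ‖f.derivative.eval y‖ := by
    refine norm_sum_le_of_forall_le_of_nonneg ?_ ?_
    · have := salpha_nonneg f y; positivity
    · intro i hi
      simp only [Finset.mem_Ico] at hi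
      obtain ⟨k, rfl⟩ : ∃ k, i = k + 1 := ⟨i - 1, by omega⟩
      have hcomp : hasseDeriv (k+1) (derivative f)
          = (k+2).choose (k+1) • hasseDeriv (k+2) f := by
        rw [← hasseDeriv_one']
        rw [← LinearMap.comp_apply, hasseDeriv_comp]
        simp [LinearMap.smul_apply]
        ring
      have hnorm1 : ‖(hasseDeriv (k+1) (derivative f)).eval y‖
          ≤ ‖(hasseDeriv (k+2) f).eval y‖ := by
        rw [hcomp]
        have : ((k+2).choose (k+1) • hasseDeriv (k+2) f : F[X]).eval y
            = ((k+2).choose (k+1) : F) * (hasseDeriv (k+2) f).eval y := by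
          rw [nsmul_eq_mul, eval_mul, eval_natCast]
        rw [this, norm_mul]
        calc ‖(((k+2).choose (k+1) : ℕ) : F)‖ * ‖(hasseDeriv (k+2) f).eval y‖
            ≤ 1 * ‖(hasseDeriv (k+2) f).eval y‖ :=
              mul_le_mul_of_nonneg_right (norm_natCast_le_one F _) (norm_nonneg _)
          _ = _ := one_mul _
      have hb : ‖h‖ = sbeta f y := step_norm hy
      calc ‖(hasseDeriv (k+1) (derivative f)).eval y * h ^ (k+1)‖
          = ‖(hasseDeriv (k+1) (derivative f)).eval y‖ * sbeta f y ^ (k+1) := by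
            rw [norm_mul, norm_pow, hb]
        _ ≤ ‖(hasseDeriv (k+2) f).eval y‖ * sbeta f y ^ (k+1) :=
            mul_le_mul_of_nonneg_right hnorm1 (pow_nonneg (sbeta_nonneg f y) _)
        _ ≤ (‖f.derivative.eval y‖ * sgamma f y ^ (k+1)) * sbeta f y ^ (k+1) :=
            mul_le_mul_of_nonneg_right (hasse_norm_le f hy k) (pow_nonneg (sbeta_nonneg f y) _)
        _ = salpha f y ^ (k+1) * ‖f.derivative.eval y‖ := by rw [salpha, mul_pow]; ring
        _ ≤ salpha f y * ‖f.derivative.eval y‖ := by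
            refine mul_le_mul_of_nonneg_right ?_ (norm_nonneg _)
            calc salpha f y ^ (k+1) = salpha f y * salpha f y ^ k := by ring
              _ ≤ salpha f y * 1 := mul_le_mul_of_nonneg_left
                  (pow_le_one₀ (salpha_nonneg f y) hα.le) (salpha_nonneg f y)
              _ = salpha f y := mul_one _
  have hlt : ‖∑ i ∈ Finset.Ico 1 N, (hasseDeriv i (derivative f)).eval y * h ^ i‖
      < ‖f.derivative.eval y‖ := by
    refine lt_of_le_of_lt hrest ?_
    have hd : 0 < ‖f.derivative.eval y‖ := norm_pos_iff.2 hy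
    nlinarith [salpha_nonneg f y]
  have hfirst : (hasseDeriv 0 (derivative f)).eval y * h ^ 0 = f.derivative.eval y := by
    simp [hasseDeriv_zero']
  rw [hnewton, hexp, hsplit, hfirst]
  -- ‖a + s‖ = ‖a‖ with ‖s‖ < ‖a‖
  set s := ∑ i ∈ Finset.Ico 1 N, (hasseDeriv i (derivative f)).eval y * h ^ i
  set a := f.derivative.eval y
  refine le_antisymm ((norm_add_le_max a s).trans (max_le le_rfl hlt.le)) ?_
  have : ‖a‖ ≤ max ‖a + s‖ ‖s‖ := by
    calc ‖a‖ = ‖a + s + (-s)‖ := by ring_nf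
      _ ≤ max ‖a + s‖ ‖-s‖ := norm_add_le_max _ _
      _ = max ‖a + s‖ ‖s‖ := by rw [norm_neg]
  rcases max_cases ‖a + s‖ ‖s‖ with ⟨he, _⟩ | ⟨he, _⟩
  · rwa [he] at this
  · rw [he] at this; linarith

end Step
section Step2

variable {F : Type*} [NormedField F] [IsUltrametricDist F] [CharZero F]

open IsUltrametricDist

variable {f : F[X]} {y : F}

lemma deriv_newton_ne (hy : f.derivative.eval y ≠ 0) (hα : salpha f y < 1) :
    f.derivative.eval (newton f y) ≠ 0 := by
  have := deriv_newton_norm_eq hy hα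
  intro h0
  rw [h0, norm_zero] at this
  exact hy (norm_eq_zero.1 this.symm)

lemma hasse_newton_le (hy : f.derivative.eval y ≠ 0) (hα : salpha f y ≤ 1) (k : ℕ) :
    ‖(hasseDeriv (k + 2) f).eval (newton f y)‖
      ≤ ‖f.derivative.eval y‖ * sgamma f y ^ (k + 1) := by
  set h : F := -(f.eval y / f.derivative.eval y) with hh
  have hnewton : newton f y = y + h := by rw [newton, hh]; ring
  set N := f.natDegree + 1 with hN
  have hdeg : (hasseDeriv (k+2) f).natDegree < N :=
    lt_of_le_of_lt (natDegree_hasseDeriv_le f (k+2)) (by omega)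
  rw [hnewton, expand _ y h hdeg]
  refine norm_sum_le_of_forall_le_of_nonneg
    (mul_nonneg (norm_nonneg _) (pow_nonneg (sgamma_nonneg f y) _)) ?_
  intro i _
  have hcomp : hasseDeriv i (hasseDeriv (k+2) f)
      = (i + (k+2)).choose i • hasseDeriv (i + (k+2)) f := by
    rw [← LinearMap.comp_apply, hasseDeriv_comp]
    simp
  have hb : ‖h‖ = sbeta f y := step_norm hy
  have heval : (hasseDeriv i (hasseDeriv (k+2) f)).eval y
      = (((i + (k+2)).choose i : ℕ) : F) * (hasseDeriv (i + (k+2)) f).eval y := by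
    rw [hcomp, nsmul_eq_mul, eval_mul, eval_natCast]
  have hik : i + (k + 2) = (i + k) + 2 := by omega
  calc ‖(hasseDeriv i (hasseDeriv (k+2) f)).eval y * h ^ i‖
      = ‖(((i + (k+2)).choose i : ℕ) : F)‖ * ‖(hasseDeriv (i + (k+2)) f).eval y‖
          * sbeta f y ^ i := by rw [heval, norm_mul, norm_mul, norm_pow, hb]
    _ ≤ 1 * ‖(hasseDeriv (i + (k+2)) f).eval y‖ * sbeta f y ^ i := by
        refine mul_le_mul_of_nonneg_right
          (mul_le_mul_of_nonneg_right (norm_natCast_le_one F _) (norm_nonneg _))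
          (pow_nonneg (sbeta_nonneg f y) _)
    _ = ‖(hasseDeriv ((i + k) + 2) f).eval y‖ * sbeta f y ^ i := by rw [one_mul, hik]
    _ ≤ (‖f.derivative.eval y‖ * sgamma f y ^ ((i + k) + 1)) * sbeta f y ^ i :=
        mul_le_mul_of_nonneg_right (hasse_norm_le f hy (i + k))
          (pow_nonneg (sbeta_nonneg f y) _)
    _ = (‖f.derivative.eval y‖ * sgamma f y ^ (k+1)) * (sgamma f y ^ i * sbeta f y ^ i) := by
        ring
    _ = (‖f.derivative.eval y‖ * sgamma f y ^ (k+1)) * salpha f y ^ i := by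
        rw [salpha, mul_pow]; ring
    _ ≤ (‖f.derivative.eval y‖ * sgamma f y ^ (k+1)) * 1 := by
        refine mul_le_mul_of_nonneg_left (pow_le_one₀ (salpha_nonneg f y) hα)
          (mul_nonneg (norm_nonneg _) (pow_nonneg (sgamma_nonneg f y) _))
    _ = ‖f.derivative.eval y‖ * sgamma f y ^ (k+1) := mul_one _

lemma sgamma_newton_le (hy : f.derivative.eval y ≠ 0) (hα : salpha f y < 1) :
    sgamma f (newton f y) ≤ sgamma f y := by
  rw [sgamma_eq]
  refine ciSup_le fun k => ?_
  have hd := deriv_newton_norm_eq hy hα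
  have hd' := deriv_newton_ne hy hα
  have h1 : ‖(hasseDeriv (k+2) f).eval (newton f y) / f.derivative.eval (newton f y)‖
      ≤ sgamma f y ^ (k+1) := by
    rw [norm_div, hd, div_le_iff₀ (norm_pos_iff.2 hy)]
    calc ‖(hasseDeriv (k+2) f).eval (newton f y)‖
        ≤ ‖f.derivative.eval y‖ * sgamma f y ^ (k+1) := hasse_newton_le hy hα.le k
      _ = sgamma f y ^ (k+1) * ‖f.derivative.eval y‖ := mul_comm _ _
  have h2 := Real.rpow_le_rpow (norm_nonneg _) h1
    (le_of_lt (by positivity : (0:ℝ) < 1 / (k+1)))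
  refine le_trans h2 ?_
  rw [← Real.rpow_natCast (sgamma f y) (k+1), ← Real.rpow_mul (sgamma_nonneg f y),
    show ((k+1 : ℕ) : ℝ) * (1 / (k+1)) = 1 by push_cast; field_simp, Real.rpow_one]

lemma sbeta_newton_le (hy : f.derivative.eval y ≠ 0) (hα : salpha f y < 1) :
    sbeta f (newton f y) ≤ salpha f y * sbeta f y := by
  have hd := deriv_newton_norm_eq hy hα
  rw [sbeta, norm_div, hd, div_le_iff₀ (norm_pos_iff.2 hy)]
  exact fval_newton_le hy hα.le

lemma salpha_newton_le (hy : f.derivative.eval y ≠ 0) (hα : salpha f y < 1) :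
    salpha f (newton f y) ≤ salpha f y := by
  have h1 : sbeta f (newton f y) ≤ sbeta f y := by
    refine (sbeta_newton_le hy hα).trans ?_
    calc salpha f y * sbeta f y ≤ 1 * sbeta f y :=
        mul_le_mul_of_nonneg_right hα.le (sbeta_nonneg f y)
      _ = sbeta f y := one_mul _
  exact mul_le_mul h1 (sgamma_newton_le hy hα) (sgamma_nonneg f _) (sbeta_nonneg f y)

end Step2
section Main

variable {F : Type*} [NormedField F] [IsUltrametricDist F]

lemma norm_add_eq_left' {a b : F} (h : ‖b‖ < ‖a‖) : ‖a + b‖ = ‖a‖ := by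
  refine le_antisymm ((IsUltrametricDist.norm_add_le_max a b).trans (max_le le_rfl h.le)) ?_
  have h2 : ‖a‖ ≤ max ‖a + b‖ ‖b‖ := by
    calc ‖a‖ = ‖a + b + (-b)‖ := by ring_nf
      _ ≤ max ‖a + b‖ ‖-b‖ := IsUltrametricDist.norm_add_le_max _ _
      _ = max ‖a + b‖ ‖b‖ := by rw [norm_neg]
  rcases max_cases ‖a + b‖ ‖b‖ with ⟨he, _⟩ | ⟨he, _⟩
  · rwa [he] at h2
  · rw [he] at h2; linarith

end Main

/-- The distance from each Newton iterate to the limit root equals the length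
of the next Newton step: `‖N_f^k(x) - ζ‖ = β(f, N_f^k(x))`. -/
theorem ultrametric_newton_dist_eq_beta
    {F : Type*} [NormedField F] [IsUltrametricDist F] [CompleteSpace F] [CharZero F]
    (f : F[X]) (x : F) (hx : f.derivative.eval x ≠ 0)
    (hα : salpha f x < 1) (ζ : F)
    (hζ : Tendsto (fun k : ℕ => (newton f)^[k] x) atTop (nhds ζ)) :
    ∀ k : ℕ, ‖(newton f)^[k] x - ζ‖ = sbeta f ((newton f)^[k] x) := by
  set xs : ℕ → F := fun k => (newton f)^[k] x with hxs
  have hsucc : ∀ k, xs (k+1) = newton f (xs k) := fun k => Function.iterate_succ_apply' _ _ _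
  set a := salpha f x with hadef
  have ha1 : a < 1 := hα
  have ha0 : 0 ≤ a := salpha_nonneg f x
  have inv : ∀ k, f.derivative.eval (xs k) ≠ 0 ∧ salpha f (xs k) ≤ a := by
    intro k; induction k with
    | zero => exact ⟨hx, le_rfl⟩
    | succ k ih =>
      obtain ⟨h1, h2⟩ := ih
      have hlt : salpha f (xs k) < 1 := lt_of_le_of_lt h2 ha1
      exact ⟨by rw [hsucc]; exact deriv_newton_ne h1 hlt,
        by rw [hsucc]; exact (salpha_newton_le h1 hlt).trans h2⟩
  have hstep : ∀ k, sbeta f (xs (k+1)) ≤ a * sbeta f (xs k) := by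
    intro k
    obtain ⟨h1, h2⟩ := inv k
    have hlt := lt_of_le_of_lt h2 ha1
    rw [hsucc]
    exact (sbeta_newton_le h1 hlt).trans (mul_le_mul_of_nonneg_right h2 (sbeta_nonneg _ _))
  have hdiffnorm : ∀ k, ‖xs (k+1) - xs k‖ = sbeta f (xs k) := by
    intro k
    have : xs (k+1) - xs k = -(f.eval (xs k) / f.derivative.eval (xs k)) := by
      rw [hsucc, newton]; ring
    rw [this, norm_neg]; rfl
  have claim2 : ∀ k j, sbeta f (xs (j + (k+1))) ≤ a * sbeta f (xs k) := by
    intro k j; induction j with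
    | zero => simpa using hstep k
    | succ j ih =>
      have he : j + 1 + (k+1) = (j + (k+1)) + 1 := by omega
      rw [he]
      refine (hstep _).trans ?_
      calc a * sbeta f (xs (j + (k+1))) ≤ a * (a * sbeta f (xs k)) :=
            mul_le_mul_of_nonneg_left ih ha0
        _ ≤ 1 * (a * sbeta f (xs k)) :=
            mul_le_mul_of_nonneg_right ha1.le (mul_nonneg ha0 (sbeta_nonneg _ _))
        _ = a * sbeta f (xs k) := one_mul _
  have claim3 : ∀ k j, ‖xs (j + (k+1)) - xs (k+1)‖ ≤ a * sbeta f (xs k) := by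
    intro k j; induction j with
    | zero => simpa using mul_nonneg ha0 (sbeta_nonneg f _)
    | succ j ih =>
      have he : j + 1 + (k+1) = (j + (k+1)) + 1 := by omega
      rw [he]
      have hsplit : xs ((j+(k+1))+1) - xs (k+1)
          = (xs ((j+(k+1))+1) - xs (j+(k+1))) + (xs (j+(k+1)) - xs (k+1)) := by ring
      rw [hsplit]
      refine (IsUltrametricDist.norm_add_le_max _ _).trans (max_le ?_ ih)
      rw [hdiffnorm]
      exact claim2 k j
  have claim4 : ∀ k, ‖ζ - xs (k+1)‖ ≤ a * sbeta f (xs k) := by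
    intro k
    have ht : Tendsto (fun j => xs (j + (k+1)) - xs (k+1)) atTop (nhds (ζ - xs (k+1))) :=
      (hζ.comp (tendsto_add_atTop_nat (k+1))).sub_const _
    exact le_of_tendsto ht.norm (Eventually.of_forall (claim3 k))
  intro k
  by_cases hb : sbeta f (xs k) = 0
  · have hzero : f.eval (xs k) / f.derivative.eval (xs k) = 0 := norm_eq_zero.1 hb
    have hfix : ∀ j, xs (j + k) = xs k := by
      intro j; induction j with
      | zero => simp
      | succ j ih =>
        have he : j + 1 + k = (j + k) + 1 := by omega
        rw [he, hsucc, ih, newton, hzero, sub_zero]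
    have hz : ζ = xs k := by
      have h1 : Tendsto (fun j => xs (j + k)) atTop (nhds ζ) :=
        hζ.comp (tendsto_add_atTop_nat k)
      have h2 : Tendsto (fun j => xs (j + k)) atTop (nhds (xs k)) := by
        have : (fun j => xs (j + k)) = fun _ => xs k := funext hfix
        rw [this]; exact tendsto_const_nhds
      exact tendsto_nhds_unique h1 h2
    rw [hz, sub_self, norm_zero, hb]
  · have hbpos : 0 < sbeta f (xs k) := lt_of_le_of_ne (sbeta_nonneg f _) (Ne.symm hb)
    have h1 : xs k - ζ = (xs k - xs (k+1)) + (xs (k+1) - ζ) := by ring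
    have h2 : ‖xs k - xs (k+1)‖ = sbeta f (xs k) := by rw [← norm_neg, neg_sub, hdiffnorm]
    have h3 : ‖xs (k+1) - ζ‖ < sbeta f (xs k) := by
      rw [← norm_neg, neg_sub]
      refine lt_of_le_of_lt (claim4 k) ?_
      nlinarith
    rw [h1, norm_add_eq_left' (by rw [h2]; exact h3), h2]
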